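/- Assume ‖M‖ = c < 1. Then for any m (a nonnegative integer or ∞), any p ≥ 1, and any initial guess u₀, the aNGMRES(m, p) iterates satisfy ‖r_k‖ ≤ c ‖r_{k−1}‖ for every k ≥ 1; in particular the residual norms ‖r_k‖ converge to zero. -/

import Mathlib

open Matrix Polynomial Set

noncomputable section

/-- Matrix–vector product, landing in Euclidean space. -/
def mulVecE {n : ℕ} (M : Matrix (Fin n) (Fin n) ℝ) (v : EuclideanSpace ℝ (Fin n)) :
    EuclideanSpace ℝ (Fin n) :=
  WithLp.toLp 2 (M.mulVec v)

/-- Residual `r(u) = A u - b`. -/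
def res {n : ℕ} (A : Matrix (Fin n) (Fin n) ℝ) (b u : EuclideanSpace ℝ (Fin n)) :
    EuclideanSpace ℝ (Fin n) :=
  mulVecE A u - b

/-- Richardson fixed-point map `q(u) = (I - A) u + b = M u + b` with `M = I - A`. -/
def fp {n : ℕ} (A : Matrix (Fin n) (Fin n) ℝ) (b u : EuclideanSpace ℝ (Fin n)) :
    EuclideanSpace ℝ (Fin n) :=
  mulVecE (1 - A) u + b

/-- The NGMRES(m) least-squares objective at step `k`:
`β ↦ ‖r(q(u_k)) + Σ_{i=0}^m β_i (r(q(u_k)) - r(u_{k-i}))‖`. -/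
def ngObj {n : ℕ} (A : Matrix (Fin n) (Fin n) ℝ) (b : EuclideanSpace ℝ (Fin n))
    (m : ℕ) (prev : ℕ → EuclideanSpace ℝ (Fin n)) (k : ℕ) (β : Fin (m+1) → ℝ) : ℝ :=
  ‖res A b (fp A b (prev k)) +
    ∑ i : Fin (m+1), β i • (res A b (fp A b (prev k)) - res A b (prev (k - (i : ℕ))))‖

/-- `next` is produced from `prev (k-m), …, prev k` by a single NGMRES(m) step:
`next = q(u_k) + Σ_{i=0}^m β_i (q(u_k) - u_{k-i})` where `β` minimizes the
least-squares objective `ngObj`. -/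
def NGMRESStep {n : ℕ} (A : Matrix (Fin n) (Fin n) ℝ) (b : EuclideanSpace ℝ (Fin n))
    (m : ℕ) (prev : ℕ → EuclideanSpace ℝ (Fin n)) (k : ℕ)
    (next : EuclideanSpace ℝ (Fin n)) : Prop :=
  ∃ β : Fin (m+1) → ℝ,
    (∀ γ : Fin (m+1) → ℝ, ngObj A b m prev k β ≤ ngObj A b m prev k γ) ∧
    next = fp A b (prev k) +
      ∑ i : Fin (m+1), β i • (fp A b (prev k) - prev (k - (i : ℕ)))

/-- The spectral (ℓ²-operator) norm of a matrix. -/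
def opNorm {n : ℕ} (M : Matrix (Fin n) (Fin n) ℝ) : ℝ :=
  ‖(Matrix.toEuclideanCLM (𝕜 := ℝ) M : EuclideanSpace ℝ (Fin n) →L[ℝ] EuclideanSpace ℝ (Fin n))‖

/-- The 2-norm condition number `κ₂(U) = ‖U‖ ‖U⁻¹‖`. -/
def condNum {n : ℕ} (U : Matrix (Fin n) (Fin n) ℝ) : ℝ :=
  opNorm U * opNorm U⁻¹

/-- `ε(a,b,s)`: minimum over real polynomials `p` of degree at most `s` with `p(1) = 1`
of `max_{t ∈ [1/b, 1/a]} |p(t)|`. -/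
def eps (a b : ℝ) (s : ℕ) : ℝ :=
  sInf {t : ℝ | ∃ p : Polynomial ℝ, p.natDegree ≤ s ∧ p.eval 1 = 1 ∧
    t = sSup ((fun x => |p.eval x|) '' Set.Icc (1/b) (1/a))}

/-- `χ(s)`: minimum over real polynomials `p` of degree at most `s` with `p(1) = 1`
of `max_{λ ∈ Σ(M)} |p(λ)|`, where `Σ(M)` is the set of eigenvalues of `M`. -/
def chiSp {n : ℕ} (M : Matrix (Fin n) (Fin n) ℝ) (s : ℕ) : ℝ :=
  sInf {t : ℝ | ∃ p : Polynomial ℝ, p.natDegree ≤ s ∧ p.eval 1 = 1 ∧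
    t = sSup ((fun x => |p.eval x|) '' spectrum ℝ M)}

/-- The Krylov subspace `K_k(A, r) = span{r, Ar, …, A^{k-1} r}`. -/
def Krylov {n : ℕ} (A : Matrix (Fin n) (Fin n) ℝ) (r : EuclideanSpace ℝ (Fin n)) (k : ℕ) :
    Submodule ℝ (EuclideanSpace ℝ (Fin n)) :=
  Submodule.span ℝ (Set.range fun i : Fin k => mulVecE (A ^ (i : ℕ)) r)

/-- The matrix `S_k = [u_{k-m+1}-u_{k-m}, …, u_k-u_{k-1}, q(u_k)-u_k] ∈ ℝ^{n×(m+1)}`. -/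
def Smat {n : ℕ} (A : Matrix (Fin n) (Fin n) ℝ) (b : EuclideanSpace ℝ (Fin n))
    (prev : ℕ → EuclideanSpace ℝ (Fin n)) (k m : ℕ) :
    Matrix (Fin n) (Fin (m+1)) ℝ :=
  Matrix.of fun r c =>
    if (c : ℕ) < m then prev (k - m + c + 1) r - prev (k - m + c) r
    else fp A b (prev k) r - prev k r

/-- `u` is the sequence of aNGMRES(m, p) iterates (with `m = ⊤` giving aNGMRES(∞, p)):
if `p ∤ k` then `u_k = q(u_{k-1})`, and if `p ∣ k` then `u_k` is produced by one
NGMRES(min(m, k-1)) step from `u_{k-1-m_k}, …, u_{k-1}`. -/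
def aNGMRES {n : ℕ} (A : Matrix (Fin n) (Fin n) ℝ) (b : EuclideanSpace ℝ (Fin n))
    (m : ℕ∞) (p : ℕ) (u : ℕ → EuclideanSpace ℝ (Fin n)) : Prop :=
  ∀ k, 1 ≤ k →
    (¬ p ∣ k → u k = fp A b (u (k-1))) ∧
    (p ∣ k → NGMRESStep A b (min m ((k : ℕ∞) - 1)).toNat u (k-1) (u k))


lemma mulVecE_eq_toEuclideanCLM {n : ℕ} (M : Matrix (Fin n) (Fin n) ℝ)
    (v : EuclideanSpace ℝ (Fin n)) : mulVecE M v = Matrix.toEuclideanCLM (𝕜 := ℝ) M v :=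
  rfl

lemma norm_mulVecE_le {n : ℕ} (M : Matrix (Fin n) (Fin n) ℝ) (v : EuclideanSpace ℝ (Fin n)) :
    ‖mulVecE M v‖ ≤ opNorm M * ‖v‖ :=
  (Matrix.toEuclideanCLM (𝕜 := ℝ) M : EuclideanSpace ℝ (Fin n) →L[ℝ]
    EuclideanSpace ℝ (Fin n)).le_opNorm v

section Residual

variable {n : ℕ} (A : Matrix (Fin n) (Fin n) ℝ) (b : EuclideanSpace ℝ (Fin n))

lemma res_fp (u : EuclideanSpace ℝ (Fin n)) :
    res A b (fp A b u) = mulVecE (1 - A) (res A b u) := by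
  simp only [res, fp, mulVecE_eq_toEuclideanCLM, map_sub, map_one, map_add, _root_.sub_apply,
    one_apply_eq_self]
  abel

lemma norm_res_fp_le (u : EuclideanSpace ℝ (Fin n)) :
    ‖res A b (fp A b u)‖ ≤ opNorm (1 - A) * ‖res A b u‖ :=
  res_fp A b u ▸ norm_mulVecE_le _ _

lemma res_add_sum_smul_sub {ι : Type*} (s : Finset ι) (x : EuclideanSpace ℝ (Fin n))
    (y : ι → EuclideanSpace ℝ (Fin n)) (β : ι → ℝ) :
    res A b (x + ∑ i ∈ s, β i • (x - y i)) =
      res A b x + ∑ i ∈ s, β i • (res A b x - res A b (y i)) := by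
  simp only [res, mulVecE_eq_toEuclideanCLM, map_add, map_sum, map_smul, map_sub,
    sub_sub_sub_cancel_right]
  abel

end Residual

/-- `β = 0` is admissible in the least-squares problem, and it reproduces `q(u_k)`. -/
lemma NGMRESStep.norm_res_le {n m k : ℕ} {A : Matrix (Fin n) (Fin n) ℝ}
    {b : EuclideanSpace ℝ (Fin n)} {prev : ℕ → EuclideanSpace ℝ (Fin n)}
    {next : EuclideanSpace ℝ (Fin n)} (h : NGMRESStep A b m prev k next) :
    ‖res A b next‖ ≤ ‖res A b (fp A b (prev k))‖ := by
  obtain ⟨β, hmin, rfl⟩ := h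
  calc ‖res A b (fp A b (prev k) + ∑ i, β i • (fp A b (prev k) - prev (k - i)))‖
      = ngObj A b m prev k β := by rw [res_add_sum_smul_sub, ngObj]
    _ ≤ ngObj A b m prev k 0 := hmin 0
    _ = ‖res A b (fp A b (prev k))‖ := by simp [ngObj]

lemma aNGMRES.norm_res_le {n p : ℕ} {m : ℕ∞} {A : Matrix (Fin n) (Fin n) ℝ}
    {b : EuclideanSpace ℝ (Fin n)} {u : ℕ → EuclideanSpace ℝ (Fin n)}
    (hu : aNGMRES A b m p u) {k : ℕ} (hk : 1 ≤ k) :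
    ‖res A b (u k)‖ ≤ opNorm (1 - A) * ‖res A b (u (k - 1))‖ := by
  by_cases hd : p ∣ k
  · exact ((hu k hk).2 hd).norm_res_le.trans (norm_res_fp_le A b _)
  · rw [(hu k hk).1 hd]
    exact norm_res_fp_le A b _

lemma tendsto_zero_of_le_mul_of_lt_one {a : ℕ → ℝ} {c : ℝ} (hc0 : 0 ≤ c) (hc1 : c < 1)
    (ha : ∀ k, 0 ≤ a k) (h : ∀ k, a (k + 1) ≤ c * a k) :
    Filter.Tendsto a Filter.atTop (nhds 0) := by
  have hgeom : Filter.Tendsto (fun k => c ^ k * a 0) Filter.atTop (nhds 0) := by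
    simpa using (tendsto_pow_atTop_nhds_zero_of_lt_one hc0 hc1).mul_const (a 0)
  exact squeeze_zero ha (fun k => le_geom hc0 k fun j _ => h j) hgeom

theorem stmt_13_general {n p : ℕ} (m : ℕ∞) (A : Matrix (Fin n) (Fin n) ℝ)
    (b : EuclideanSpace ℝ (Fin n)) (c : ℝ)
    (hc : opNorm ((1 : Matrix (Fin n) (Fin n) ℝ) - A) = c) (hc1 : c < 1)
    (u : ℕ → EuclideanSpace ℝ (Fin n)) (hu : aNGMRES A b m p u) :
    (∀ k, 1 ≤ k → ‖res A b (u k)‖ ≤ c * ‖res A b (u (k-1))‖) ∧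
      Filter.Tendsto (fun k => ‖res A b (u k)‖) Filter.atTop (nhds 0) := by
  have hcontract : ∀ k, 1 ≤ k → ‖res A b (u k)‖ ≤ c * ‖res A b (u (k-1))‖ :=
    fun k hk => hc ▸ hu.norm_res_le hk
  refine ⟨hcontract, ?_⟩
  exact tendsto_zero_of_le_mul_of_lt_one (hc ▸ norm_nonneg _) hc1 (fun k => norm_nonneg _)
    fun k => hcontract (k + 1) (Nat.le_add_left 1 k)

/-- if `‖M‖ = c < 1` then aNGMRES(m, p) contracts residual norms for any
m (finite or ∞), any p ≥ 1 and any initial guess; in particular `‖r_k‖ → 0`. -/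
theorem stmt_13 {n p : ℕ} (hp : 1 ≤ p) (m : ℕ∞) (A : Matrix (Fin n) (Fin n) ℝ)
    (hA : IsUnit A) (b : EuclideanSpace ℝ (Fin n)) (c : ℝ)
    (hc : opNorm ((1 : Matrix (Fin n) (Fin n) ℝ) - A) = c) (hc1 : c < 1)
    (u : ℕ → EuclideanSpace ℝ (Fin n)) (hu : aNGMRES A b m p u) :
    (∀ k, 1 ≤ k → ‖res A b (u k)‖ ≤ c * ‖res A b (u (k-1))‖) ∧
      Filter.Tendsto (fun k => ‖res A b (u k)‖) Filter.atTop (nhds 0) :=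
  stmt_13_general m A b c hc hc1 u hu

end
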